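/- Suppose T is an Aronszajn tree and E ⊆ ω₁ is unbounded. If there is an order-preserving f : T_E → ℚ such that whenever x,y,z ∈ T_E with f(x)=f(y)=f(z), x<y, and x<z, then y and z are comparable, then there is a strictly order-preserving map from T_E into ℚ. -/

import Mathlib

open Cardinal Set

/-- The first uncountable ordinal. -/
noncomputable def omega1 : Ordinal := (Cardinal.aleph 1).ord

/-- A tree of height `ω₁`: a partial order equipped with a rank (height) function into the
countable ordinals which is strictly monotone, has countable levels, and whose sets of
predecessors are linearly ordered. -/
structure OmegaOneTree.{u_1, u_2} (T : Type u_1) [PartialOrder T] where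
  rk : T → Ordinal.{u_2}
  rk_lt_omega1 : ∀ x, rk x < omega1
  rk_strictMono : ∀ {x y : T}, x < y → rk x < rk y
  levels_countable : ∀ β : Ordinal, {x : T | rk x = β}.Countable
  pred_linear : ∀ x y z : T, y ≤ x → z ≤ x → y ≤ z ∨ z ≤ y

/-- `C` is a closed unbounded subset of `ω₁`. -/
def IsClubBelow (C : Set Ordinal) : Prop :=
  C ⊆ Set.Iio omega1 ∧ (∀ α < omega1, ∃ β ∈ C, α < β) ∧
    ∀ δ, 0 < δ → δ < omega1 → (∀ β < δ, ∃ γ ∈ C, β < γ ∧ γ < δ) → δ ∈ C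

/-- `S` is a stationary subset of `ω₁`. -/
def IsStationaryBelow (S : Set Ordinal) : Prop :=
  S ⊆ Set.Iio omega1 ∧ ∀ C, IsClubBelow C → (S ∩ C).Nonempty

/-!
Each fiber `f⁻¹(r)` is the disjoint union of the cones of `f⁻¹(r)` above its minimal elements.
By the hypothesis on `f` each cone is a chain, hence countable because `T` is Aronszajn, and so
embeds into `ℚ`. Ordering `T_E` lexicographically by `f x` and then by the position of `x` in its
cone is strictly monotone, and `ℚ ×ₗ ℚ` embeds into `ℚ`.
-/

section StrictMonoRat

variable {α : Type*} [PartialOrder α]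

theorem exists_strictMonoOn_rat_of_isChain {s : Set α} (hchain : IsChain (· ≤ ·) s)
    (hcount : s.Countable) : ∃ q : α → ℚ, StrictMonoOn q s := by
  classical
  let := hchain.linearOrder
  have := hcount.to_subtype
  obtain ⟨e⟩ : Nonempty (s ↪o ℚ) := Order.embedding_from_countable_to_dense _ _
  refine ⟨fun x => if hx : x ∈ s then e ⟨x, hx⟩ else 0, fun x hx y hy hxy => ?_⟩
  simp only [dif_pos hx, dif_pos hy]
  exact e.strictMono hxy

theorem exists_orderEmbedding_lex_rat : Nonempty (ℚ ×ₗ ℚ ↪o ℚ) :=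
  haveI : Countable (ℚ ×ₗ ℚ) := inferInstanceAs (Countable (ℚ × ℚ))
  Order.embedding_from_countable_to_dense _ _

theorem exists_strictMono_rat_of_monotone {ι : Type*} {f : α → ℚ} (hf : Monotone f) (c : α → ι)
    (hc : ∀ ⦃x y⦄, x < y → f x = f y → c x = c y)
    (hchain : ∀ i, IsChain (· ≤ ·) (c ⁻¹' {i})) (hcount : ∀ i, (c ⁻¹' {i}).Countable) :
    ∃ g : α → ℚ, StrictMono g := by
  choose q hq using fun i => exists_strictMonoOn_rat_of_isChain (hchain i) (hcount i)
  obtain ⟨e⟩ := exists_orderEmbedding_lex_rat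
  refine ⟨fun x => e (toLex (f x, q (c x) x)), fun x y hxy => e.strictMono ?_⟩
  refine Prod.Lex.toLex_lt_toLex'.2 ⟨hf hxy.le, fun hfxy => ?_⟩
  have hcxy : c x = c y := hc hxy hfxy
  show q (c x) x < q (c y) y
  rw [← hcxy]
  exact hq (c x) rfl hcxy.symm hxy

end StrictMonoRat

section FiberRoot

variable {α β : Type*} [PartialOrder α] [WellFoundedLT α] {f : α → β} {x y : α}

noncomputable def fiberRoot (f : α → β) (y : α) : α :=
  wellFounded_lt.min {z | z ≤ y ∧ f z = f y} ⟨y, le_rfl, rfl⟩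

theorem fiberRoot_le : fiberRoot f y ≤ y :=
  (wellFounded_lt.min_mem {z | z ≤ y ∧ f z = f y} ⟨y, le_rfl, rfl⟩).1

theorem apply_fiberRoot : f (fiberRoot f y) = f y :=
  (wellFounded_lt.min_mem {z | z ≤ y ∧ f z = f y} ⟨y, le_rfl, rfl⟩).2

theorem not_lt_fiberRoot {z : α} (hzy : z ≤ y) (hf : f z = f y) : ¬z < fiberRoot f y :=
  wellFounded_lt.not_lt_min {z | z ≤ y ∧ f z = f y} (⟨hzy, hf⟩ : z ≤ y ∧ f z = f y)

theorem fiberRoot_eq_of_le (htree : ∀ x : α, IsChain (· ≤ ·) (Iic x)) (hxy : x ≤ y)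
    (hf : f x = f y) : fiberRoot f x = fiberRoot f y := by
  have hyx : fiberRoot f y ≤ x :=
    (htree y).le_of_not_gt hxy fiberRoot_le (not_lt_fiberRoot hxy hf)
  apply le_antisymm
  · exact (htree x).le_of_not_gt hyx fiberRoot_le
      (not_lt_fiberRoot hyx (apply_fiberRoot.trans hf.symm))
  · exact (htree y).le_of_not_gt (fiberRoot_le.trans hxy) fiberRoot_le
      (not_lt_fiberRoot (fiberRoot_le.trans hxy) (apply_fiberRoot.trans hf))

theorem isChain_fiberRoot_preimage
    (hweak : ∀ x y z : α, f x = f y → f x = f z → x < y → x < z → y ≤ z ∨ z ≤ y) (i : α) :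
    IsChain (· ≤ ·) (fiberRoot f ⁻¹' {i}) := by
  intro y hy z hz _
  simp only [mem_preimage, mem_singleton_iff] at hy hz
  subst hy
  rcases (fiberRoot_le : fiberRoot f y ≤ y).eq_or_lt with hry | hry
  · exact Or.inl (hry ▸ hz ▸ fiberRoot_le)
  rcases (fiberRoot_le : fiberRoot f z ≤ z).eq_or_lt with hrz | hrz
  · exact Or.inr (hrz ▸ hz ▸ fiberRoot_le)
  exact hweak _ y z apply_fiberRoot (hz ▸ apply_fiberRoot) hry (hz ▸ hrz)

end FiberRoot

theorem stmt5_general {T : Type*} [PartialOrder T] (t : OmegaOneTree T)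
    (hAron : ∀ c : Set T, IsChain (· ≤ ·) c → c.Countable)
    (E : Set Ordinal)
    (f : {x : T // t.rk x ∈ E} → ℚ)
    (hmono : ∀ x y : {x : T // t.rk x ∈ E}, (x : T) ≤ (y : T) → f x ≤ f y)
    (hweak : ∀ x y z : {x : T // t.rk x ∈ E}, f x = f y → f x = f z →
      (x : T) < (y : T) → (x : T) < (z : T) → ((y : T) ≤ (z : T) ∨ (z : T) ≤ (y : T))) :
    ∃ g : {x : T // t.rk x ∈ E} → ℚ,
      ∀ x y : {x : T // t.rk x ∈ E}, (x : T) < (y : T) → g x < g y := by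
  have : WellFoundedLT {x : T // t.rk x ∈ E} :=
    StrictMono.wellFoundedLT (f := fun x : {x : T // t.rk x ∈ E} => t.rk x)
      fun _ _ h => t.rk_strictMono h
  have htree : ∀ x : {x : T // t.rk x ∈ E}, IsChain (· ≤ ·) (Iic x) :=
    fun x y hy z hz _ => t.pred_linear x y z hy hz
  have hchain := isChain_fiberRoot_preimage hweak
  have hcount (i : {x : T // t.rk x ∈ E}) : (fiberRoot f ⁻¹' {i}).Countable :=
    countable_of_injective_of_countable_image Subtype.val_injective.injOn
      (hAron _ ((hchain i).image (OrderEmbedding.subtype _)))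
  obtain ⟨g, hg⟩ := exists_strictMono_rat_of_monotone hmono (fiberRoot f)
    (fun _ _ hxy => fiberRoot_eq_of_le htree hxy.le) hchain hcount
  exact ⟨g, fun _ _ hxy => hg hxy⟩

/-- If `T` is an Aronszajn tree, `E ⊆ ω₁` is unbounded, and there is an
order-preserving `f : T_E → ℚ` such that `f x = f y = f z`, `x < y`, `x < z` imply `y, z`
comparable, then there is a strictly order-preserving map from `T_E` into `ℚ`. -/
theorem stmt5 {T : Type*} [PartialOrder T] (t : OmegaOneTree T)
    (hAron : ∀ c : Set T, IsChain (· ≤ ·) c → c.Countable)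
    (E : Set Ordinal) (hE : E ⊆ Set.Iio omega1)
    (hEunbdd : ∀ α < omega1, ∃ β ∈ E, α ≤ β)
    (f : {x : T // t.rk x ∈ E} → ℚ)
    (hmono : ∀ x y : {x : T // t.rk x ∈ E}, (x : T) ≤ (y : T) → f x ≤ f y)
    (hweak : ∀ x y z : {x : T // t.rk x ∈ E}, f x = f y → f x = f z →
      (x : T) < (y : T) → (x : T) < (z : T) → ((y : T) ≤ (z : T) ∨ (z : T) ≤ (y : T))) :
    ∃ g : {x : T // t.rk x ∈ E} → ℚ,
      ∀ x y : {x : T // t.rk x ∈ E}, (x : T) < (y : T) → g x < g y :=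
  stmt5_general t hAron E f hmono hweak
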